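/- Validity of the one-sided Clopper–Pearson upper bound: let k ~ Binomial(m, R) with m ≥ 1 and R ∈ [0,1], and define U_α(k, m) = sup { p ∈ [0,1] : F(k; m, p) ≥ α } (with U_α(k, m) = 1 if k = m). Then P[R > U_α(k, m)] ≤ α. -/
import Mathlib


open Finset

/-- Binomial CDF: `F k m p = ∑_{i=0}^{k} C(m,i) p^i (1-p)^(m-i)`. -/
noncomputable def binomCDF (k m : ℕ) (p : ℝ) : ℝ :=
  ∑ i ∈ range (k + 1), (m.choose i : ℝ) * p ^ i * (1 - p) ^ (m - i)

/-- One-sided Clopper–Pearson upper bound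
`U_α(k,m) = sup { p ∈ [0,1] : F(k; m, p) ≥ α }`, with `U_α(m,m) = 1`. -/
noncomputable def cpUpper (a : ℝ) (k m : ℕ) : ℝ :=
  if k = m then 1 else sSup {p : ℝ | p ∈ Set.Icc (0 : ℝ) 1 ∧ a ≤ binomCDF k m p}

/-- Validity of the one-sided Clopper–Pearson upper bound: for `k ~ Binomial(m, R)`,
`P[R > U_α(k, m)] = ∑_{i : R > U_α(i,m)} C(m,i) R^i (1-R)^(m-i) ≤ α`. -/
theorem stmt7 (m : ℕ) (hm : 1 ≤ m) (R : ℝ) (hR : R ∈ Set.Icc (0 : ℝ) 1)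
    (a : ℝ) (ha : a ∈ Set.Ioo (0 : ℝ) 1) :
    ∑ i ∈ range (m + 1),
      (if cpUpper a i m < R then (m.choose i : ℝ) * R ^ i * (1 - R) ^ (m - i) else 0)
      ≤ a := by
  obtain ⟨hR0, hR1⟩ := hR
  obtain ⟨ha0, ha1⟩ := ha
  have h1R : (0:ℝ) ≤ 1 - R := by linarith
  set S := (range (m+1)).filter (fun i => cpUpper a i m < R) with hS
  have hsum : ∑ i ∈ range (m + 1),
      (if cpUpper a i m < R then (m.choose i : ℝ) * R ^ i * (1 - R) ^ (m - i) else 0)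
      = ∑ i ∈ S, (m.choose i : ℝ) * R ^ i * (1 - R) ^ (m - i) :=
    (Finset.sum_filter _ _).symm
  rw [hsum]
  by_cases hSe : S.Nonempty
  · set K := S.max' hSe with hK
    have hKS : K ∈ S := S.max'_mem hSe
    have hKlt : cpUpper a K m < R := (Finset.mem_filter.mp hKS).2
    have hKm : K ≠ m := by
      intro h
      rw [h] at hKlt
      simp [cpUpper] at hKlt
      linarith
    have hbdd : BddAbove {p : ℝ | p ∈ Set.Icc (0:ℝ) 1 ∧ a ≤ binomCDF K m p} :=
      ⟨1, fun p hp => hp.1.2⟩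
    have hFlt : binomCDF K m R < a := by
      by_contra h
      push_neg at h
      have : R ≤ cpUpper a K m := by
        rw [cpUpper, if_neg hKm]
        exact le_csSup hbdd ⟨⟨hR0, hR1⟩, h⟩
      linarith
    have hsub : S ⊆ range (K+1) := fun i hi =>
      Finset.mem_range.mpr (Nat.lt_succ_of_le (S.le_max' i hi))
    have hnn : ∀ i ∈ range (K+1), i ∉ S →
        0 ≤ (m.choose i : ℝ) * R ^ i * (1 - R) ^ (m - i) := by
      intro i _ _
      have : (0:ℝ) ≤ (m.choose i : ℝ) := Nat.cast_nonneg _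
      positivity
    calc ∑ i ∈ S, (m.choose i : ℝ) * R ^ i * (1 - R) ^ (m - i)
        ≤ ∑ i ∈ range (K+1), (m.choose i : ℝ) * R ^ i * (1 - R) ^ (m - i) :=
          Finset.sum_le_sum_of_subset_of_nonneg hsub hnn
      _ = binomCDF K m R := rfl
      _ ≤ a := le_of_lt hFlt
  · rw [Finset.not_nonempty_iff_eq_empty.mp hSe, Finset.sum_empty]
    linarith
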